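/- If I ⊆ [0, N−1] satisfies the Partial Order Property, then for every i ∈ I the set K_i is contained in I. -/

import Mathlib

noncomputable section
open scoped Classical
open Finset

/-- The 2×2 binary matrix [[1,0],[1,1]], as an ℕ-indexed function (zero outside range). -/
def G2 (a b : ℕ) : ZMod 2 :=
  if a = 0 ∧ b = 0 then 1
  else if a = 1 ∧ b = 0 then 1
  else if a = 1 ∧ b = 1 then 1
  else 0

/-- `G n i c` is the (i,c) entry of the n-th Kronecker power over F₂ of [[1,0],[1,1]],
for row/column indices i, c ∈ [0, 2^n − 1] (standard row-major index flattening). -/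
def G : ℕ → ℕ → ℕ → ZMod 2
  | 0 => fun i c => if i = 0 ∧ c = 0 then 1 else 0
  | n + 1 => fun i c => G2 (i / 2 ^ n) (c / 2 ^ n) * G n (i % 2 ^ n) (c % 2 ^ n)

/-- Row i of the polar transform G_N (N = 2^n), as a vector of its coordinates. -/
def g (n i : ℕ) : ℕ → ZMod 2 := fun c => G n i c

/-- S_i ⊆ [0, n−1]: the support of the binary representation of i. -/
def S (n i : ℕ) : Finset ℕ := (Finset.range n).filter fun a => i.testBit a

/-- T_i = [0, n−1] \ S_i. -/
def T (n i : ℕ) : Finset ℕ := Finset.range n \ S n i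

/-- Hamming weight of a vector whose coordinates are indexed by [0, 2^n − 1]. -/
def wt (n : ℕ) (v : ℕ → ZMod 2) : ℕ :=
  ((Finset.range (2 ^ n)).filter fun c => v c ≠ 0).card

/-- The index in [0, 2^n − 1] whose binary support is the set U ⊆ [0, n−1]. -/
def idx (U : Finset ℕ) : ℕ := ∑ a ∈ U, 2 ^ a

/-- K_i = {j ∈ [i+1, N−1] : w(g_j) ≥ w(g_i ⊕ g_j) and w(g_i ⊕ g_j) = w(g_i)}. -/
def K (n i : ℕ) : Finset ℕ :=
  (Finset.Ico (i + 1) (2 ^ n)).filter fun j =>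
    wt n (g n i + g n j) ≤ wt n (g n j) ∧ wt n (g n i + g n j) = wt n (g n i)

/-- One generating step of the partial order on [0, 2^n − 1]. -/
def poStep (n i j : ℕ) : Prop :=
  i < 2 ^ n ∧ j < 2 ^ n ∧
    (S n i ⊆ S n j ∨
      ∃ a b, a ∈ S n i ∧ b ∉ S n i ∧ a < b ∧ S n j = insert b (S n i \ {a}))

/-- The partial order ⪯: reflexive–transitive closure of the generating relation. -/
def po (n : ℕ) : ℕ → ℕ → Prop := Relation.ReflTransGen (poStep n)

/-- Partial Order Property of an information set I ⊆ [0, 2^n − 1]. -/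
def POP (n : ℕ) (I : Finset ℕ) : Prop :=
  ∀ i ∈ I, ∀ j, j < 2 ^ n → po n i j → j ∈ I

/-- The code C(I): all F₂-linear combinations (i.e. subset sums) of the rows g_i, i ∈ I. -/
def codewords (n : ℕ) (I : Finset ℕ) : Finset (ℕ → ZMod 2) :=
  I.powerset.image fun H => ∑ h ∈ H, g n h

/-- A_w(I): the number of codewords of C(I) of Hamming weight w. -/
def A (n : ℕ) (I : Finset ℕ) (w : ℕ) : ℕ :=
  ((codewords n I).filter fun v => wt n v = w).card

/-- The coset C_i(I) = {g_i ⊕ ⊕_{h∈H} g_h : H ⊆ I \ [0,i]}. -/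
def coset (n : ℕ) (I : Finset ℕ) (i : ℕ) : Finset (ℕ → ZMod 2) :=
  ((I.filter fun h => i < h).powerset).image fun H => g n i + ∑ h ∈ H, g n h

/-- A_{i,w}(I): the number of vectors of Hamming weight w in the coset C_i(I). -/
def Ai (n : ℕ) (I : Finset ℕ) (i w : ℕ) : ℕ :=
  ((coset n I i).filter fun v => wt n v = w).card

/-! Row `g_i` is the indicator of the down-set `{c : S_c ⊆ S_i}`, so `w(g_i) = 2^|S_i|` and
`w(g_i ⊕ g_j) = 2^|S_i| + 2^|S_j| - 2·2^|S_i ∩ S_j|`. The two weight conditions defining `K_i` then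
force `|S_j \ S_i| = 1` and `|S_i \ S_j| ≤ 1`: either `S_i ⊆ S_j`, or `S_j` arises from `S_i` by
exchanging one element `a` for one element `b`, and `a < b` because `i < j` compares `S_i` and `S_j`
colexicographically. Either way `i ⪯ j` by a single generating step, so `j ∈ I` by POP. -/

lemma mem_S {n i a : ℕ} : a ∈ S n i ↔ a < n ∧ i.testBit a := by
  simp [S]

lemma S_subset_range (n i : ℕ) : S n i ⊆ range n :=
  filter_subset _ _

lemma S_eq_toFinset_bitIndices {n i : ℕ} (hi : i < 2 ^ n) : S n i = i.bitIndices.toFinset := by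
  ext a
  simp only [mem_S, List.mem_toFinset, Nat.mem_bitIndices, and_iff_right_iff_imp]
  intro ha
  exact (Nat.pow_lt_pow_iff_right (by norm_num)).mp ((Nat.ge_two_pow_of_testBit ha).trans_lt hi)

lemma sum_S_two_pow {n i : ℕ} (hi : i < 2 ^ n) : ∑ a ∈ S n i, 2 ^ a = i := by
  rw [S_eq_toFinset_bitIndices hi, sum_toFinset_bitIndices_two_pow]

lemma S_sum_two_pow {n : ℕ} {U : Finset ℕ} (hU : U ⊆ range n) :
    S n (∑ a ∈ U, 2 ^ a) = U := by
  rw [S_eq_toFinset_bitIndices, toFinset_bitIndices_sum_two_pow]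
  exact Nat.geomSum_lt le_rfl fun a ha => mem_range.mp (hU ha)

lemma injOn_S (n : ℕ) : Set.InjOn (S n) (range (2 ^ n)) := fun i hi j hj hij => by
  rw [← sum_S_two_pow (mem_range.mp hi), hij, sum_S_two_pow (mem_range.mp hj)]

lemma image_S_range (n : ℕ) : (range (2 ^ n)).image (S n) = (range n).powerset := by
  ext U
  simp only [mem_image, mem_powerset, mem_range]
  refine ⟨fun ⟨i, _, hU⟩ => hU ▸ S_subset_range n i, fun hU => ⟨_, ?_, S_sum_two_pow hU⟩⟩
  exact Nat.geomSum_lt le_rfl fun a ha => mem_range.mp (hU ha)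

lemma card_filter_S (n : ℕ) (p : Finset ℕ → Prop) [DecidablePred p] :
    #{i ∈ range (2 ^ n) | p (S n i)} = #{U ∈ (range n).powerset | p U} := by
  rw [← image_S_range, filter_image, card_image_of_injOn ((injOn_S n).mono (filter_subset _ _))]

lemma card_filter_S_subset {n : ℕ} {U : Finset ℕ} (hU : U ⊆ range n) :
    #{c ∈ range (2 ^ n) | S n c ⊆ U} = 2 ^ #U := by
  have hfilter : {V ∈ (range n).powerset | V ⊆ U} = U.powerset := by
    ext V
    simp only [mem_filter, mem_powerset]
    exact ⟨And.right, fun h => ⟨h.trans hU, h⟩⟩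
  rw [card_filter_S n (· ⊆ U), hfilter, card_powerset]

lemma S_subset_S_iff {n i c : ℕ} : S n c ⊆ S n i ↔ ∀ a < n, c.testBit a → i.testBit a := by
  simp +contextual [subset_iff, mem_S]

lemma div_two_pow_eq_toNat_testBit {n i : ℕ} (hi : i < 2 ^ (n + 1)) :
    i / 2 ^ n = (i.testBit n).toNat := by
  rw [Nat.toNat_testBit, Nat.mod_eq_of_lt (Nat.div_lt_of_lt_mul (by rwa [← pow_succ]))]

lemma G2_toNat_toNat (p q : Bool) : G2 p.toNat q.toNat = if q → p then 1 else 0 := by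
  cases p <;> cases q <;> rfl

lemma G_eq_ite_subset {n i c : ℕ} (hi : i < 2 ^ n) (hc : c < 2 ^ n) :
    G n i c = if S n c ⊆ S n i then 1 else 0 := by
  induction n generalizing i c with
  | zero => simp_all [G, S]
  | succ n ih =>
    simp only [G]
    rw [ih (Nat.mod_lt _ (Nat.two_pow_pos n)) (Nat.mod_lt _ (Nat.two_pow_pos n)),
      div_two_pow_eq_toNat_testBit hi, div_two_pow_eq_toNat_testBit hc, G2_toNat_toNat]
    simp only [S_subset_S_iff, Nat.testBit_mod_two_pow, Nat.forall_lt_succ_right]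
    split_ifs <;> simp_all

lemma g_apply_ne_zero_iff {n i c : ℕ} (hi : i < 2 ^ n) (hc : c < 2 ^ n) :
    g n i c ≠ 0 ↔ S n c ⊆ S n i := by
  rw [g, G_eq_ite_subset hi hc]
  split_ifs <;> simp_all

lemma wt_g {n i : ℕ} (hi : i < 2 ^ n) : wt n (g n i) = 2 ^ #(S n i) := by
  rw [wt, ← card_filter_S_subset (S_subset_range n i)]
  exact congrArg card (filter_congr fun c hc => g_apply_ne_zero_iff hi (mem_range.mp hc))

lemma ZMod.add_ne_zero_iff_not_iff {x y : ZMod 2} : x + y ≠ 0 ↔ ¬(x ≠ 0 ↔ y ≠ 0) := by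
  revert x y
  decide

lemma card_filter_not_iff_add {α : Type*} (s : Finset α) (p q : α → Prop)
    [DecidablePred p] [DecidablePred q] :
    #{x ∈ s | ¬(p x ↔ q x)} + 2 * #{x ∈ s | p x ∧ q x} = #{x ∈ s | p x} + #{x ∈ s | q x} := by
  simp only [card_filter, mul_sum, ← sum_add_distrib]
  refine sum_congr rfl fun x _ => ?_
  by_cases hp : p x <;> by_cases hq : q x <;> simp [hp, hq]

lemma wt_g_add_g {n i j : ℕ} (hi : i < 2 ^ n) (hj : j < 2 ^ n) :
    wt n (g n i + g n j) + 2 * 2 ^ #(S n i ∩ S n j) = 2 ^ #(S n i) + 2 ^ #(S n j) := by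
  have hsum : wt n (g n i + g n j) = #{c ∈ range (2 ^ n) | ¬(S n c ⊆ S n i ↔ S n c ⊆ S n j)} := by
    refine congrArg card (filter_congr fun c hc => ?_)
    rw [Pi.add_apply, ← g_apply_ne_zero_iff hi (mem_range.mp hc),
      ← g_apply_ne_zero_iff hj (mem_range.mp hc)]
    exact ZMod.add_ne_zero_iff_not_iff
  simp only [hsum, ← card_filter_S_subset (S_subset_range n _),
    ← card_filter_S_subset (inter_subset_left.trans (S_subset_range n i)), subset_inter_iff]
  exact card_filter_not_iff_add _ _ _

lemma mem_K {n i j : ℕ} : j ∈ K n i ↔ i < j ∧ j < 2 ^ n ∧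
    wt n (g n i + g n j) ≤ wt n (g n j) ∧ wt n (g n i + g n j) = wt n (g n i) := by
  simp only [K, mem_filter, mem_Ico, Nat.add_one_le_iff, and_assoc]

lemma card_sdiff_of_mem_K {n i j : ℕ} (hj : j ∈ K n i) :
    #(S n j \ S n i) = 1 ∧ #(S n i \ S n j) ≤ 1 := by
  obtain ⟨hij, hjN, hle, heq⟩ := mem_K.mp hj
  have hiN : i < 2 ^ n := hij.trans hjN
  have hsum := wt_g_add_g hiN hjN
  rw [heq, wt_g hiN] at hsum
  rw [heq, wt_g hiN, wt_g hjN] at hle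
  have hj_card : #(S n j) = #(S n i ∩ S n j) + 1 :=
    Nat.pow_right_injective le_rfl (show 2 ^ _ = 2 ^ _ by rw [pow_succ]; omega)
  have hi_card : #(S n i) ≤ #(S n i ∩ S n j) + 1 :=
    (Nat.pow_le_pow_iff_right (by norm_num : 1 < 2)).mp (by rw [pow_succ]; omega)
  have hj_split := card_sdiff_add_card_inter (S n j) (S n i)
  have hi_split := card_sdiff_add_card_inter (S n i) (S n j)
  rw [inter_comm] at hj_split
  omega

lemma Finset.eq_insert_sdiff_of_sdiff_eq_singleton {α : Type*} [DecidableEq α] {s t : Finset α}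
    {a b : α} (ha : s \ t = {a}) (hb : t \ s = {b}) : t = insert b (s \ {a}) := by
  ext x
  have hax := Finset.ext_iff.mp ha x
  have hbx := Finset.ext_iff.mp hb x
  simp only [mem_sdiff, mem_singleton, mem_insert] at hax hbx ⊢
  tauto

lemma lt_of_S_eq_insert_sdiff {n i j a b : ℕ} (hj : j < 2 ^ n) (hij : i < j) (ha : a ∈ S n i)
    (hb : b ∉ S n i) (hS : S n j = insert b (S n i \ {a})) : a < b := by
  rw [← sum_S_two_pow (hij.trans hj), ← sum_S_two_pow hj,
    geomSum_lt_geomSum_iff_toColex_lt_toColex le_rfl, hS] at hij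
  conv_lhs at hij => rw [← insert_erase ha]
  rwa [sdiff_singleton_eq_erase, Colex.insert_lt_insert (notMem_erase a _)
    (fun h => hb (mem_of_mem_erase h))] at hij

lemma poStep_of_mem_K {n i j : ℕ} (hj : j ∈ K n i) : poStep n i j := by
  obtain ⟨hij, hjN, -⟩ := mem_K.mp hj
  obtain ⟨hji_card, hij_card⟩ := card_sdiff_of_mem_K hj
  refine ⟨hij.trans hjN, hjN, ?_⟩
  rcases Nat.le_one_iff_eq_zero_or_eq_one.mp hij_card with h0 | h1
  · exact Or.inl (sdiff_eq_empty_iff_subset.mp (card_eq_zero.mp h0))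
  · obtain ⟨a, ha⟩ := card_eq_one.mp h1
    obtain ⟨b, hb⟩ := card_eq_one.mp hji_card
    have haS : a ∈ S n i := (mem_sdiff.mp (ha.ge (mem_singleton_self a))).1
    have hbS : b ∉ S n i := (mem_sdiff.mp (hb.ge (mem_singleton_self b))).2
    have hS := eq_insert_sdiff_of_sdiff_eq_singleton ha hb
    exact Or.inr ⟨a, b, haS, hbS, lt_of_S_eq_insert_sdiff hjN hij haS hbS hS, hS⟩

theorem K_subset_of_POP_general (n : ℕ) (I : Finset ℕ) (hPOP : POP n I) :
    ∀ i ∈ I, ∀ j ∈ K n i, j ∈ I :=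
  fun i hi j hj => hPOP i hi j (mem_K.mp hj).2.1 (.single (poStep_of_mem_K hj))

/-- if I satisfies the Partial Order Property then K_i ⊆ I for every i ∈ I. -/
theorem K_subset_of_POP (n : ℕ) (hn : 1 ≤ n) (I : Finset ℕ)
    (hIr : ∀ i ∈ I, i < 2 ^ n) (hPOP : POP n I) :
    ∀ i ∈ I, ∀ j ∈ K n i, j ∈ I :=
  K_subset_of_POP_general n I hPOP
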